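/- arXiv:1104.4345 — 3 statements merged into one kernel-verified Lean document; each statement's English description precedes it below -/
import Mathlib

section
/- For s ∈ (0,1) define B(s) = s(1−s) ∫_ℝ (1−cos t)/|t|^{1+2s} dt. Then lim_{s→1⁻} B(s) = 1/2 and lim_{s→0⁺} B(s) = 1. -/
/-!
Write `∫_ℝ (1 - cos t)/|t|^p` (with `p = 1 + 2s`) as twice the integral over `(0, ∞)` and split
at `1`. On `(0, 1]` the Taylor bound `1 - cos t = t²/2 + O(t⁴)` gives `1/(2(3-p)) + O(1)`. On
`(1, ∞)` the term `1` gives `1/(p-1)`, while `∫₁^∞ t^(-p) cos t` stays bounded as `p → 1` after one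
integration by parts. Hence `B(s) = 1 - s/2 + O(s(1-s))`.
-/

open MeasureTheory Filter Set
open scoped ENNReal
noncomputable section

def Bfun (s : ℝ) : ℝ := s * (1 - s) * ∫ t : ℝ, (1 - Real.cos t) / |t| ^ (1 + 2 * s)

open Real Topology

lemma integrableOn_rpow_Ioc_zero_one {r : ℝ} (hr : -1 < r) :
    IntegrableOn (fun t : ℝ => t ^ r) (Ioc 0 1) := by
  have h := intervalIntegral.intervalIntegrable_rpow' (a := 0) (b := 1) hr
  rwa [intervalIntegrable_iff_integrableOn_Ioc_of_le zero_le_one] at h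

lemma integral_rpow_Ioc_zero_one {r : ℝ} (hr : -1 < r) :
    ∫ t in Ioc (0 : ℝ) 1, t ^ r = 1 / (r + 1) := by
  rw [← intervalIntegral.integral_of_le zero_le_one, integral_rpow (Or.inl hr), one_rpow,
    zero_rpow (by linarith), sub_zero]

section Ioc

variable {p : ℝ}

lemma abs_one_sub_cos_div_rpow_sub_le (hp : p ≤ 4) {t : ℝ} (ht : t ∈ Ioc 0 1) :
    |(1 - cos t) / t ^ p - t ^ (2 - p) / 2| ≤ 5 / 96 := by
  obtain ⟨ht0, ht1⟩ := ht
  have htp : 0 < t ^ p := rpow_pos_of_pos ht0 p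
  have htaylor := cos_bound (x := t) (by rwa [abs_of_pos ht0])
  rw [abs_of_pos ht0] at htaylor
  have h4 : t ^ 4 ≤ t ^ p := by
    rw [← rpow_natCast]; exact rpow_le_rpow_of_exponent_ge ht0 ht1 (by norm_num [hp])
  calc |(1 - cos t) / t ^ p - t ^ (2 - p) / 2|
      = |cos t - (1 - t ^ 2 / 2)| / t ^ p := by
        rw [rpow_sub ht0, rpow_two, show (1 - cos t) / t ^ p - t ^ 2 / t ^ p / 2
          = -((cos t - (1 - t ^ 2 / 2)) / t ^ p) by ring, abs_neg, abs_div, abs_of_pos htp]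
    _ ≤ t ^ 4 * (5 / 96) / t ^ p := by gcongr
    _ ≤ 5 / 96 := by rw [div_le_iff₀ htp]; nlinarith

lemma integrableOn_one_sub_cos_div_rpow_sub_Ioc (hp : p ≤ 4) :
    IntegrableOn (fun t => (1 - cos t) / t ^ p - t ^ (2 - p) / 2) (Ioc 0 1) :=
  Measure.integrableOn_of_bounded (M := 5 / 96) (by simp) (by fun_prop)
    ((ae_restrict_iff' measurableSet_Ioc).2 <| ae_of_all _ fun _ ht ↦
      abs_one_sub_cos_div_rpow_sub_le hp ht)

lemma integrableOn_one_sub_cos_div_rpow_Ioc (hp : p < 3) :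
    IntegrableOn (fun t => (1 - cos t) / t ^ p) (Ioc 0 1) :=
  ((integrableOn_one_sub_cos_div_rpow_sub_Ioc (by linarith)).add
    ((integrableOn_rpow_Ioc_zero_one (r := 2 - p) (by linarith)).div_const 2)).congr_fun
    (fun t _ ↦ sub_add_cancel _ _) measurableSet_Ioc

lemma abs_integral_one_sub_cos_div_rpow_Ioc_sub_le (hp : p < 3) :
    |(∫ t in Ioc (0 : ℝ) 1, (1 - cos t) / t ^ p) - 1 / (2 * (3 - p))| ≤ 5 / 96 := by
  have hpow : ∫ t in Ioc (0 : ℝ) 1, t ^ (2 - p) / 2 = 1 / (2 * (3 - p)) := by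
    rw [integral_div, integral_rpow_Ioc_zero_one (by linarith)]
    field_simp
    ring
  have h := norm_setIntegral_le_of_norm_le_const (μ := volume) measure_Ioc_lt_top
    fun _ ht ↦ (Real.norm_eq_abs _).trans_le
      (abs_one_sub_cos_div_rpow_sub_le (p := p) (by linarith) ht)
  rw [integral_sub (integrableOn_one_sub_cos_div_rpow_Ioc hp)
    ((integrableOn_rpow_Ioc_zero_one (by linarith)).div_const 2), hpow] at h
  simpa using h

end Ioc

section Ioi

variable {p : ℝ}

lemma integrableOn_rpow_neg_mul_of_abs_le {g : ℝ → ℝ} {C : ℝ} (hg : Measurable g)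
    (hC : ∀ t, |g t| ≤ C) (hp : 1 < p) :
    IntegrableOn (fun t => t ^ (-p) * g t) (Ioi 1) :=
  (integrableOn_Ioi_rpow_of_lt (by linarith) one_pos).mul_bdd hg.aestronglyMeasurable
    (ae_of_all _ hC)

lemma abs_integral_rpow_neg_mul_cos_Ioi_le (hp : 1 < p) :
    |∫ t in Ioi (1 : ℝ), t ^ (-p) * cos t| ≤ 2 := by
  have hp0 : 0 < p := by linarith
  have hderiv_int : IntegrableOn (fun t => -p * t ^ (-p - 1)) (Ioi 1) :=
    (integrableOn_Ioi_rpow_of_lt (by linarith) one_pos).const_mul _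
  -- Integrating by parts against `sin` trades `t^(-p)` for `p t^(-p-1)`, whose integral over
  -- `(1, ∞)` is `1` for every `p`, so the bound does not degenerate as `p → 1`.
  have hibp := integral_Ioi_mul_deriv_eq_deriv_mul (a' := 1 ^ (-p) * sin 1) (b' := 0)
    (u := fun t => t ^ (-p)) (v := sin)
    (fun t ht ↦ hasDerivAt_rpow_const (Or.inl (by linarith [mem_Ioi.1 ht])))
    (fun t _ ↦ hasDerivAt_sin t)
    (integrableOn_rpow_neg_mul_of_abs_le continuous_cos.measurable abs_cos_le_one hp)
    (hderiv_int.mul_bdd continuous_sin.aestronglyMeasurable (ae_of_all _ abs_sin_le_one))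
    ((show ContinuousAt (fun t : ℝ => t ^ (-p) * sin t) 1 by
      fun_prop (disch := norm_num)).tendsto.mono_left nhdsWithin_le_nhds)
    ((tendsto_rpow_neg_atTop hp0).zero_mul_isBoundedUnder_le
      (isBoundedUnder_of ⟨1, fun t ↦ abs_sin_le_one t⟩))
  have hrest : |∫ t in Ioi (1 : ℝ), -p * t ^ (-p - 1) * sin t| ≤ 1 := by
    have hval : ∫ t in Ioi (1 : ℝ), p * t ^ (-p - 1) = 1 := by
      rw [integral_const_mul, integral_Ioi_rpow_of_lt (by linarith) one_pos, one_rpow,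
        show -p - 1 + 1 = -p by ring, div_neg, neg_div, neg_neg]
      exact mul_one_div_cancel hp0.ne'
    calc |∫ t in Ioi (1 : ℝ), -p * t ^ (-p - 1) * sin t|
        ≤ ∫ t in Ioi (1 : ℝ), p * t ^ (-p - 1) := by
          rw [← Real.norm_eq_abs]
          refine norm_integral_le_of_norm_le (hderiv_int.neg.congr_fun (fun t _ ↦ ?_)
            measurableSet_Ioi) ((ae_restrict_iff' measurableSet_Ioi).2 <| ae_of_all _ fun t ht ↦ ?_)
          · simp
          · have ht0 : 0 ≤ t ^ (-p - 1) := rpow_nonneg (by linarith [mem_Ioi.1 ht]) _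
            rw [norm_mul, norm_mul, norm_neg, Real.norm_of_nonneg hp0.le,
              Real.norm_of_nonneg ht0]
            exact mul_le_of_le_one_right (by positivity) (abs_sin_le_one t)
      _ = 1 := hval
  rw [hibp, one_rpow, one_mul, zero_sub]
  calc |-sin 1 - ∫ t in Ioi (1 : ℝ), -p * t ^ (-p - 1) * sin t|
      ≤ |-sin 1| + |∫ t in Ioi (1 : ℝ), -p * t ^ (-p - 1) * sin t| := abs_sub _ _
    _ ≤ 2 := by rw [abs_neg]; linarith [abs_sin_le_one 1]

lemma eqOn_one_sub_cos_div_rpow_Ioi :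
    EqOn (fun t => t ^ (-p) - t ^ (-p) * cos t) (fun t => (1 - cos t) / t ^ p) (Ioi 0) :=
  fun t ht ↦ by simp only [rpow_neg (le_of_lt ht)]; ring

lemma integrableOn_one_sub_cos_div_rpow_Ioi (hp : 1 < p) :
    IntegrableOn (fun t => (1 - cos t) / t ^ p) (Ioi 1) :=
  ((integrableOn_Ioi_rpow_of_lt (by linarith) one_pos).sub
    (integrableOn_rpow_neg_mul_of_abs_le continuous_cos.measurable abs_cos_le_one hp)).congr_fun
    (eqOn_one_sub_cos_div_rpow_Ioi.mono (Ioi_subset_Ioi zero_le_one)) measurableSet_Ioi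

lemma integral_one_sub_cos_div_rpow_Ioi (hp : 1 < p) :
    ∫ t in Ioi (1 : ℝ), (1 - cos t) / t ^ p
      = 1 / (p - 1) - ∫ t in Ioi (1 : ℝ), t ^ (-p) * cos t := by
  rw [← setIntegral_congr_fun measurableSet_Ioi
    (eqOn_one_sub_cos_div_rpow_Ioi.mono (Ioi_subset_Ioi zero_le_one)),
    integral_sub (integrableOn_Ioi_rpow_of_lt (by linarith) one_pos)
      (integrableOn_rpow_neg_mul_of_abs_le continuous_cos.measurable abs_cos_le_one hp),
    integral_Ioi_rpow_of_lt (by linarith) one_pos, one_rpow]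
  congr 1
  rw [show -p + 1 = -(p - 1) by ring, div_neg, neg_div, neg_neg]

end Ioi

lemma abs_integral_one_sub_cos_div_abs_rpow_sub_le {p : ℝ} (hp1 : 1 < p) (hp3 : p < 3) :
    |(∫ t : ℝ, (1 - cos t) / |t| ^ p) - (1 / (3 - p) + 2 / (p - 1))| ≤ 5 := by
  have hsym : ∫ t : ℝ, (1 - cos t) / |t| ^ p = 2 * ∫ t in Ioi 0, (1 - cos t) / t ^ p := by
    simpa only [cos_abs] using integral_comp_abs (f := fun u => (1 - cos u) / u ^ p)
  have hsplit : ∫ t in Ioi 0, (1 - cos t) / t ^ p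
      = (∫ t in Ioc 0 1, (1 - cos t) / t ^ p) + ∫ t in Ioi 1, (1 - cos t) / t ^ p := by
    rw [← Ioc_union_Ioi_eq_Ioi zero_le_one]
    exact setIntegral_union Ioc_disjoint_Ioi_same measurableSet_Ioi
      (integrableOn_one_sub_cos_div_rpow_Ioc hp3) (integrableOn_one_sub_cos_div_rpow_Ioi hp1)
  have hnear := abs_integral_one_sub_cos_div_rpow_Ioc_sub_le hp3
  have hfar := abs_integral_rpow_neg_mul_cos_Ioi_le hp1
  have h3 : 2 * (1 / (2 * (3 - p))) = 1 / (3 - p) := by field_simp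
  have h1 : 2 * (1 / (p - 1)) = 2 / (p - 1) := by ring
  rw [hsym, hsplit, integral_one_sub_cos_div_rpow_Ioi hp1, ← h3, ← h1]
  rw [abs_le] at *
  constructor <;> linarith

lemma abs_Bfun_sub_le {s : ℝ} (hs : s ∈ Ioo 0 1) : |Bfun s - (1 - s / 2)| ≤ 5 * (s * (1 - s)) := by
  obtain ⟨hs0, hs1⟩ := hs
  have hI := abs_integral_one_sub_cos_div_abs_rpow_sub_le (p := 1 + 2 * s) (by linarith)
    (by linarith)
  have hpos : 0 < s * (1 - s) := mul_pos hs0 (by linarith)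
  have hmain : s * (1 - s) * (1 / (3 - (1 + 2 * s)) + 2 / (1 + 2 * s - 1)) = 1 - s / 2 := by
    rw [show 3 - (1 + 2 * s) = 2 * (1 - s) by ring, show 1 + 2 * s - 1 = 2 * s by ring]
    field_simp [show 1 - s ≠ 0 by linarith]
    ring
  rw [Bfun, ← hmain, ← mul_sub, abs_mul, abs_of_pos hpos, mul_comm 5]
  exact mul_le_mul_of_nonneg_left hI hpos.le

lemma tendsto_Bfun {l : Filter ℝ} {s₀ : ℝ} (hl : Ioo 0 1 ∈ l) (hs₀ : l ≤ 𝓝 s₀)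
    (h : s₀ * (1 - s₀) = 0) : Tendsto Bfun l (𝓝 (1 - s₀ / 2)) := by
  have hmain : Tendsto (fun s : ℝ => 1 - s / 2) l (𝓝 (1 - s₀ / 2)) :=
    ((show Continuous fun s : ℝ => 1 - s / 2 by fun_prop).tendsto s₀).mono_left hs₀
  have herr : Tendsto (fun s : ℝ => 5 * (s * (1 - s))) l (𝓝 0) := by
    simpa [h] using ((show Continuous fun s : ℝ => 5 * (s * (1 - s)) by fun_prop).tendsto
      s₀).mono_left hs₀
  have hdiff : Tendsto (fun s => Bfun s - (1 - s / 2)) l (𝓝 0) :=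
    squeeze_zero_norm' (Eventually.mono hl fun _ hs ↦ abs_Bfun_sub_le hs) herr
  simpa using hdiff.add hmain

/-- `B(s) → 1/2` as `s → 1⁻` and `B(s) → 1` as `s → 0⁺`. -/
theorem Bfun_limits :
    Tendsto Bfun (nhdsWithin 1 (Set.Iio 1)) (nhds (1 / 2)) ∧
    Tendsto Bfun (nhdsWithin 0 (Set.Ioi 0)) (nhds 1) := by
  constructor
  · convert tendsto_Bfun (Ioo_mem_nhdsLT zero_lt_one) nhdsWithin_le_nhds (by norm_num) using 2
    norm_num
  · convert tendsto_Bfun (Ioo_mem_nhdsGT zero_lt_one) nhdsWithin_le_nhds (by norm_num) using 2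
    norm_num
end
end

section
/- Fix x ∈ ℝⁿ, p ∈ [1,∞), s ∈ (0,1), and let E ⊂ ℝⁿ be a measurable set of finite positive Lebesgue measure. Then ∫_{ℝⁿ∖E} |x−y|^{−n−sp} dy ≥ C |E|^{−sp/n} for a constant C = C(n,p,s) > 0. -/
/-!
Let `B = B(x, ρ)` be the ball with `|B| = |E|`, so that `|E \ B| = |B \ E|`. The kernel
`|x - y|^{-a}`, `a = n + sp`, is `≤ ρ^{-a}` off `B` and `≥ ρ^{-a}` on `B`, hence
`∫_{E \ B} ≤ ρ^{-a} |E \ B| = ρ^{-a} |B \ E| ≤ ∫_{B \ E}`, i.e. `∫_{∁B} ≤ ∫_{∁E}`.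
Instead of integrating over `∁B` in polar coordinates, it suffices to bound the kernel below by
`(2ρ)^{-a}` on the annulus `B(x, 2ρ) \ B` of measure `(2^n - 1)|B|`; since `ρ^n ∝ |B|` this gives
`∫_{∁B} ≥ C |B|^{1 - a/n} = C |E|^{-sp/n}`.
-/

open MeasureTheory Set Metric Module
open scoped ENNReal

theorem setLIntegral_compl_le_of_measure_eq {α : Type*} [MeasurableSpace α] {μ : Measure α}
    {f : α → ℝ≥0∞} {s t : Set α} {c : ℝ≥0∞} (hs : MeasurableSet s) (ht : MeasurableSet t)
    (hst : μ s = μ t) (hfin : μ s ≠ ∞) (hf_ge : ∀ᵐ y ∂μ, y ∈ t → c ≤ f y)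
    (hf_le : ∀ y ∉ t, f y ≤ c) :
    ∫⁻ y in tᶜ, f y ∂μ ≤ ∫⁻ y in sᶜ, f y ∂μ := by
  have hswap : μ (s \ t) = μ (t \ s) := measure_sdiff_symm hs.nullMeasurableSet
    ht.nullMeasurableSet hst (measure_ne_top_of_subset inter_subset_left hfin)
  rw [← lintegral_inter_add_sdiff f tᶜ hs, ← lintegral_inter_add_sdiff f sᶜ ht,
    sdiff_eq, sdiff_eq, inter_comm tᶜ sᶜ]
  gcongr ?_ + _
  calc ∫⁻ y in tᶜ ∩ s, f y ∂μ ≤ ∫⁻ _ in tᶜ ∩ s, c ∂μ :=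
        setLIntegral_mono' (ht.compl.inter hs) fun y hy ↦ hf_le y hy.1
    _ = ∫⁻ _ in sᶜ ∩ t, c ∂μ := by
        rw [setLIntegral_const, setLIntegral_const, inter_comm, ← sdiff_eq, hswap, inter_comm,
          sdiff_eq]
    _ ≤ ∫⁻ y in sᶜ ∩ t, f y ∂μ :=
        setLIntegral_mono_ae' (hs.compl.inter ht) (hf_ge.mono fun y hy hy' ↦ hy hy'.2)

theorem measureReal_ball_pos {X : Type*} [PseudoMetricSpace X] [ProperSpace X]
    [MeasurableSpace X] (μ : Measure X) [μ.IsOpenPosMeasure] [IsFiniteMeasureOnCompacts μ]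
    (x : X) {r : ℝ} (hr : 0 < r) : 0 < μ.real (ball x r) :=
  ENNReal.toReal_pos (measure_ball_pos μ x hr).ne' measure_ball_lt_top.ne

section AddHaar

variable {E : Type*} [NormedAddCommGroup E] [NormedSpace ℝ E] [MeasurableSpace E] [BorelSpace E]
  [FiniteDimensional ℝ E] (μ : Measure E) [μ.IsAddHaarMeasure]

theorem addHaar_closedBall_two_mul_sdiff_ball (x : E) {r : ℝ} (hr : 0 < r) :
    μ (closedBall x (2 * r) \ ball x r) = (2 ^ finrank ℝ E - 1) * μ (ball x r) := by
  rw [measure_sdiff (ball_subset_closedBall.trans (closedBall_subset_closedBall (by linarith)))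
    measurableSet_ball.nullMeasurableSet measure_ball_lt_top.ne,
    Measure.addHaar_closedBall μ x (by positivity), Measure.addHaar_ball_of_pos μ x hr, mul_pow,
    ENNReal.ofReal_mul (by positivity), ENNReal.sub_mul (fun _ _ ↦ by finiteness)]
  simp [mul_assoc]

theorem le_setLIntegral_compl_ball {a : ℝ} (ha : 0 ≤ a) (x : E) {r : ℝ} (hr : 0 < r) :
    ENNReal.ofReal ((2 * r) ^ (-a)) * ((2 ^ finrank ℝ E - 1) * μ (ball x r))
      ≤ ∫⁻ y in (ball x r)ᶜ, ENNReal.ofReal (‖x - y‖ ^ (-a)) ∂μ := by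
  rw [← addHaar_closedBall_two_mul_sdiff_ball μ x hr, ← setLIntegral_const]
  calc ∫⁻ _ in closedBall x (2 * r) \ ball x r, ENNReal.ofReal ((2 * r) ^ (-a)) ∂μ
      ≤ ∫⁻ y in closedBall x (2 * r) \ ball x r, ENNReal.ofReal (‖x - y‖ ^ (-a)) ∂μ := by
        refine setLIntegral_mono' (measurableSet_closedBall.diff measurableSet_ball) ?_
        rintro y ⟨hy_le, hy_ge⟩
        rw [mem_closedBall, dist_comm, dist_eq_norm] at hy_le
        rw [mem_ball, dist_comm, dist_eq_norm, not_lt] at hy_ge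
        exact ENNReal.ofReal_le_ofReal
          (Real.rpow_le_rpow_of_nonpos (hr.trans_le hy_ge) hy_le (neg_nonpos.2 ha))
    _ ≤ ∫⁻ y in (ball x r)ᶜ, ENNReal.ofReal (‖x - y‖ ^ (-a)) ∂μ :=
        lintegral_mono_set fun y hy ↦ hy.2

variable [Nontrivial E]

theorem exists_pos_addHaar_ball_eq (x : E) {m : ℝ≥0∞} (h0 : m ≠ 0) (htop : m ≠ ∞) :
    ∃ r > 0, μ (ball x r) = m := by
  have hd : (finrank ℝ E : ℝ) ≠ 0 := by exact_mod_cast finrank_pos.ne'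
  have hω : 0 < μ.real (ball 0 1) := measureReal_ball_pos μ 0 one_pos
  refine ⟨(m.toReal / μ.real (ball 0 1)) ^ (1 / (finrank ℝ E : ℝ)),
    by have := ENNReal.toReal_pos h0 htop; positivity, ?_⟩
  rw [Measure.addHaar_ball μ x (by positivity), ← Real.rpow_natCast,
    ← Real.rpow_mul (by positivity), one_div_mul_cancel hd, Real.rpow_one,
    ENNReal.ofReal_div_of_pos hω, ENNReal.ofReal_toReal htop, ofReal_measureReal,
    ENNReal.div_mul_cancel (measure_ball_pos μ 0 one_pos).ne' (by finiteness)]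

theorem le_setLIntegral_compl_ball_measureReal {a : ℝ} (ha : 0 ≤ a) (x : E) {r : ℝ}
    (hr : 0 < r) :
    ENNReal.ofReal (2 ^ (-a) * (2 ^ finrank ℝ E - 1) *
        μ.real (ball 0 1) ^ (a / finrank ℝ E) *
        μ.real (ball x r) ^ (1 - a / finrank ℝ E))
      ≤ ∫⁻ y in (ball x r)ᶜ, ENNReal.ofReal (‖x - y‖ ^ (-a)) ∂μ := by
  set d := finrank ℝ E
  set ω := μ.real (ball 0 1)
  have hd : (d : ℝ) ≠ 0 := by exact_mod_cast finrank_pos.ne'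
  have hω : 0 < ω := measureReal_ball_pos μ 0 one_pos
  have hball : μ.real (ball x r) = r ^ d * ω := by
    rw [measureReal_def, Measure.addHaar_ball_of_pos μ x hr, ENNReal.toReal_mul,
      ENNReal.toReal_ofReal (by positivity), ← measureReal_def]
  have hpow : (2 : ℝ≥0∞) ^ d - 1 = ENNReal.ofReal (2 ^ d - 1) := by
    rw [ENNReal.ofReal_sub _ zero_le_one, ENNReal.ofReal_pow zero_le_two, ENNReal.ofReal_ofNat,
      ENNReal.ofReal_one]
  refine le_trans (le_of_eq ?_) (le_setLIntegral_compl_ball μ ha x hr)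
  rw [hpow, ← ofReal_measureReal, ← ENNReal.ofReal_mul (sub_nonneg.2 (one_le_pow₀ one_le_two)),
    ← ENNReal.ofReal_mul (by positivity), hball]
  congr 1
  rw [Real.mul_rpow (by positivity) hω.le, ← Real.rpow_natCast r d, ← Real.rpow_mul hr.le,
    Real.mul_rpow zero_le_two hr.le, Real.rpow_sub hω, Real.rpow_one,
    show (d : ℝ) * (1 - a / d) = -a + d by field_simp; ring, Real.rpow_add hr]
  field_simp

end AddHaar

theorem integral_compl_ge_general (n : ℕ) (hn : 0 < n) (p s : ℝ) (hp : 1 ≤ p) (hs : 0 < s) :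
    ∃ C : ℝ, 0 < C ∧
      ∀ (x : EuclideanSpace ℝ (Fin n)) (E : Set (EuclideanSpace ℝ (Fin n))),
        MeasurableSet E → volume E ≠ 0 → volume E ≠ ⊤ →
        ENNReal.ofReal (C * (volume E).toReal ^ (-(s * p) / (n : ℝ)))
          ≤ ∫⁻ y in Eᶜ, ENNReal.ofReal (‖x - y‖ ^ (-((n : ℝ) + s * p))) := by
  have : Nontrivial (EuclideanSpace ℝ (Fin n)) :=
    have : Nonempty (Fin n) := ⟨⟨0, hn⟩⟩
    inferInstance
  set a : ℝ := (n : ℝ) + s * p with ha_def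
  have ha : 0 ≤ a := by positivity
  have hfinrank : finrank ℝ (EuclideanSpace ℝ (Fin n)) = n := finrank_euclideanSpace_fin
  refine ⟨2 ^ (-a) * (2 ^ n - 1) * volume.real (ball (0 : EuclideanSpace ℝ (Fin n)) 1) ^ (a / n),
    ?_, ?_⟩
  · exact mul_pos (mul_pos (by positivity) (sub_pos.2 (one_lt_pow₀ one_lt_two hn.ne')))
      (Real.rpow_pos_of_pos (measureReal_ball_pos volume 0 one_pos) _)
  intro x E hE h0 htop
  obtain ⟨ρ, hρ, hball⟩ := exists_pos_addHaar_ball_eq volume x h0 htop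
  have hexp : -(s * p) / (n : ℝ) = 1 - a / n := by
    rw [ha_def]; field_simp; ring
  calc _ = _ := by rw [hexp, ← hball, hfinrank]; rfl
    _ ≤ _ := le_setLIntegral_compl_ball_measureReal volume ha x hρ
    _ ≤ _ := by
      refine setLIntegral_compl_le_of_measure_eq (c := ENNReal.ofReal (ρ ^ (-a)))
        hE measurableSet_ball hball.symm htop ?_ fun y hy ↦ ?_
      · filter_upwards [volume.ae_ne x] with y hyx hy
        rw [mem_ball', dist_eq_norm] at hy
        exact ENNReal.ofReal_le_ofReal <| Real.rpow_le_rpow_of_nonpos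
          (norm_pos_iff.2 (sub_ne_zero.2 hyx.symm)) hy.le (neg_nonpos.2 ha)
      · rw [mem_ball', dist_eq_norm, not_lt] at hy
        exact ENNReal.ofReal_le_ofReal (Real.rpow_le_rpow_of_nonpos hρ hy (neg_nonpos.2 ha))

/-- For `p ∈ [1,∞)`, `s ∈ (0,1)`, `x ∈ ℝⁿ` and any measurable `E ⊂ ℝⁿ` of finite positive
measure, `∫_{∁E} |x−y|^{−n−sp} dy ≥ C |E|^{−sp/n}` with `C = C(n,p,s) > 0`. -/
theorem integral_compl_ge (n : ℕ) (hn : 0 < n) (p s : ℝ) (hp : 1 ≤ p) (hs : 0 < s)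
    (hs1 : s < 1) :
    ∃ C : ℝ, 0 < C ∧
      ∀ (x : EuclideanSpace ℝ (Fin n)) (E : Set (EuclideanSpace ℝ (Fin n))),
        MeasurableSet E → volume E ≠ 0 → volume E ≠ ⊤ →
        ENNReal.ofReal (C * (volume E).toReal ^ (-(s * p) / (n : ℝ)))
          ≤ ∫⁻ y in Eᶜ, ENNReal.ofReal (‖x - y‖ ^ (-((n : ℝ) + s * p))) :=
  integral_compl_ge_general n hn p s hp hs
end

section
/- Let s ∈ (0,1) and p ∈ [1,∞) with sp < n, and set p* = np/(n−sp). Fix T > 1 and let (a_k)_{k∈ℤ} be a bounded, nonnegative, nonincreasing sequence with a_k = 0 for all k ≥ N for some N ∈ ℤ. Then ∑_{k∈ℤ} a_k^{(n−sp)/n} T^k ≤ C ∑_{k∈ℤ, a_k≠0} a_{k+1} a_k^{−sp/n} T^k, for a constant C = C(n,p,s,T) > 0 independent of N and of the sequence. -/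
/-!
Put `α = sp/n ∈ (0,1)`. Since `a_{k+1}^{1-α} = (a_{k+1} a_k^{-α})^{1-α} (a_k^{1-α})^α`,
Young's inequality with `ε = 1/2` bounds the `(k+1)`-st term of the left-hand sum by
`C` times the `k`-th term of the right-hand sum plus half the `k`-th term of the left-hand sum.
Summing over `k ∈ ℤ` and absorbing half of the left-hand sum, which is finite because `a` is
bounded, vanishes for `k ≥ N` and `T > 1`, gives the inequality with constant `2C`.
-/

open scoped ENNReal

/-- The constant `C` of Young's inequality `c u ^ (1 - α) v ^ α ≤ C u + ε v`. -/
noncomputable def youngConst (α c ε : ℝ) : ℝ := (1 - α) * (c * (α / ε) ^ α) ^ (1 - α)⁻¹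

lemma youngConst_pos {α c ε : ℝ} (hα0 : 0 < α) (hα1 : α < 1) (hc : 0 < c) (hε : 0 < ε) :
    0 < youngConst α c ε := by
  unfold youngConst
  have : 0 < 1 - α := by linarith
  positivity

lemma mul_rpow_mul_rpow_le_youngConst {α c ε u v : ℝ} (hα0 : 0 < α) (hα1 : α < 1) (hc : 0 ≤ c)
    (hε : 0 < ε) (hu : 0 ≤ u) (hv : 0 ≤ v) :
    c * (u ^ (1 - α) * v ^ α) ≤ youngConst α c ε * u + ε * v := by
  set lam := (c * (α / ε) ^ α) ^ (1 - α)⁻¹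
  have h1α : 0 < 1 - α := by linarith
  have hlam : lam ^ (1 - α) = c * (α / ε) ^ α := by
    rw [← Real.rpow_mul (by positivity), inv_mul_cancel₀ h1α.ne', Real.rpow_one]
  have hamgm := Real.geom_mean_le_arith_mean2_weighted h1α.le hα0.le
    (mul_nonneg (by positivity : 0 ≤ lam) hu) (by positivity : 0 ≤ ε / α * v) (by ring)
  calc c * (u ^ (1 - α) * v ^ α)
      = (lam * u) ^ (1 - α) * (ε / α * v) ^ α := by
        rw [Real.mul_rpow (by positivity) hu, Real.mul_rpow (by positivity) hv, hlam,
          Real.div_rpow hε.le hα0.le, Real.div_rpow hα0.le hε.le]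
        field_simp
    _ ≤ (1 - α) * (lam * u) + α * (ε / α * v) := hamgm
    _ = youngConst α c ε * u + ε * v := by
        simp only [youngConst, lam]
        field_simp

lemma rpow_one_sub_eq_rpow_mul_rpow {α x y : ℝ} (hx : 0 < x) (hy : 0 ≤ y) :
    y ^ (1 - α) = (y * x ^ (-α)) ^ (1 - α) * (x ^ (1 - α)) ^ α := by
  rw [Real.mul_rpow hy (by positivity), ← Real.rpow_mul hx.le, ← Real.rpow_mul hx.le,
    mul_assoc, ← Real.rpow_add hx, show -α * (1 - α) + (1 - α) * α = 0 by ring,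
    Real.rpow_zero, mul_one]

lemma mul_rpow_one_sub_le_youngConst {α c ε x y : ℝ} (hα0 : 0 < α) (hα1 : α < 1) (hc : 0 ≤ c)
    (hε : 0 < ε) (hx : 0 ≤ x) (hy : 0 ≤ y) (hxy : x = 0 → y = 0) :
    c * y ^ (1 - α) ≤
      youngConst α c ε * (if x = 0 then 0 else y * x ^ (-α)) + ε * x ^ (1 - α) := by
  rcases hx.eq_or_lt with rfl | hx
  · simp [hxy rfl, Real.zero_rpow (by linarith : 1 - α ≠ 0)]
  rw [if_neg hx.ne', rpow_one_sub_eq_rpow_mul_rpow hx hy]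
  exact mul_rpow_mul_rpow_le_youngConst hα0 hα1 hc hε (by positivity) (by positivity)

lemma ENNReal.le_two_mul_of_le_add_inv_two_mul {S A : ℝ≥0∞} (hS : S ≠ ∞) (h : S ≤ A + 2⁻¹ * S) :
    S ≤ 2 * A := by
  have hhalf : 2⁻¹ * S ≤ A := by
    refine ENNReal.le_of_add_le_add_right
      (ENNReal.mul_ne_top (ENNReal.inv_ne_top.2 two_ne_zero) hS) ?_
    rwa [← add_mul, ENNReal.inv_two_add_inv_two, one_mul]
  calc S = 2 * (2⁻¹ * S) := by
        rw [← mul_assoc, ENNReal.mul_inv_cancel two_ne_zero ENNReal.ofNat_ne_top, one_mul]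
    _ ≤ 2 * A := by gcongr

lemma ENNReal.tsum_le_two_mul_of_le_add_inv_two_mul {F R : ℤ → ℝ≥0∞} {C : ℝ≥0∞}
    (hF : ∑' k, F k ≠ ∞) (h : ∀ k, F (k + 1) ≤ C * R k + 2⁻¹ * F k) :
    ∑' k, F k ≤ 2 * C * ∑' k, R k := by
  rw [mul_assoc]
  refine ENNReal.le_two_mul_of_le_add_inv_two_mul hF ?_
  calc ∑' k, F k = ∑' k, F (k + 1) := ((Equiv.addRight (1 : ℤ)).tsum_eq F).symm
    _ ≤ ∑' k, (C * R k + 2⁻¹ * F k) := ENNReal.tsum_le_tsum h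
    _ = C * ∑' k, R k + 2⁻¹ * ∑' k, F k := by
        rw [ENNReal.tsum_add, ENNReal.tsum_mul_left, ENNReal.tsum_mul_left]

lemma summable_mul_zpow_of_eventually_zero {b : ℤ → ℝ} {T M : ℝ} {N : ℤ} (hT : 1 < T)
    (hb0 : ∀ k, 0 ≤ b k) (hbM : ∀ k, b k ≤ M) (hzero : ∀ k, N ≤ k → b k = 0) :
    Summable fun k => b k * T ^ k := by
  have hT0 : 0 < T := by linarith
  refine summable_int_iff_summable_nat_and_neg.2 ⟨?_, ?_⟩
  · refine summable_of_ne_finset_zero (s := Finset.range N.toNat) fun k hk => ?_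
    rw [hzero k (by simp at hk; omega), zero_mul]
  · refine Summable.of_nonneg_of_le (fun k => mul_nonneg (hb0 _) (zpow_pos hT0 _).le)
      (fun k => ?_)
      ((summable_geometric_of_lt_one (by positivity) (inv_lt_one_of_one_lt₀ hT)).mul_left M)
    rw [zpow_neg, zpow_natCast, ← inv_pow]
    gcongr
    exact hbM _

lemma ofReal_rpow_one_sub_mul_le_youngConst {α T t x y : ℝ} (hα0 : 0 < α) (hα1 : α < 1)
    (hT : 0 < T) (ht : 0 < t) (hx : 0 ≤ x) (hy : 0 ≤ y) (hxy : x = 0 → y = 0) :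
    ENNReal.ofReal (y ^ (1 - α) * (t * T))
      ≤ ENNReal.ofReal (youngConst α T 2⁻¹) *
          ENNReal.ofReal (if x = 0 then 0 else y * x ^ (-α) * t)
        + 2⁻¹ * ENNReal.ofReal (x ^ (1 - α) * t) := by
  have hK := youngConst_pos hα0 hα1 hT (inv_pos.2 two_pos)
  have hr : 0 ≤ if x = 0 then 0 else y * x ^ (-α) * t := by
    split_ifs
    exacts [le_rfl, by positivity]
  have hreal : y ^ (1 - α) * (t * T) ≤ youngConst α T 2⁻¹ *
      (if x = 0 then 0 else y * x ^ (-α) * t) + 2⁻¹ * (x ^ (1 - α) * t) :=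
    calc y ^ (1 - α) * (t * T) = T * y ^ (1 - α) * t := by ring
      _ ≤ (youngConst α T 2⁻¹ * (if x = 0 then 0 else y * x ^ (-α))
            + 2⁻¹ * x ^ (1 - α)) * t := by
        gcongr
        exact mul_rpow_one_sub_le_youngConst hα0 hα1 hT.le (inv_pos.2 two_pos) hx hy hxy
      _ = _ := by split_ifs <;> ring
  refine (ENNReal.ofReal_le_ofReal hreal).trans_eq ?_
  rw [ENNReal.ofReal_add (by positivity) (by positivity), ENNReal.ofReal_mul hK.le,
    ENNReal.ofReal_mul (by norm_num), ENNReal.ofReal_inv_of_pos two_pos, ENNReal.ofReal_ofNat]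

theorem tsum_ofReal_rpow_mul_zpow_le {α T M : ℝ} (hα0 : 0 < α) (hα1 : α < 1) (hT : 1 < T)
    {a : ℤ → ℝ} {N : ℤ} (ha0 : ∀ k, 0 ≤ a k) (hmono : ∀ k, a (k + 1) ≤ a k)
    (hM : ∀ k, a k ≤ M) (hzero : ∀ k, N ≤ k → a k = 0) :
    ∑' k : ℤ, ENNReal.ofReal (a k ^ (1 - α) * T ^ k)
      ≤ ENNReal.ofReal (2 * youngConst α T 2⁻¹) *
        ∑' k : ℤ, ENNReal.ofReal (if a k = 0 then 0 else a (k + 1) * a k ^ (-α) * T ^ k) := by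
  have hT0 : 0 < T := by linarith
  have h1α : 0 < 1 - α := by linarith
  have hsum : Summable fun k => a k ^ (1 - α) * T ^ k :=
    summable_mul_zpow_of_eventually_zero hT (fun k => Real.rpow_nonneg (ha0 k) _)
      (fun k => Real.rpow_le_rpow (ha0 k) (hM k) h1α.le)
      (fun k hk => by rw [hzero k hk, Real.zero_rpow h1α.ne'])
  rw [ENNReal.ofReal_mul zero_le_two, ENNReal.ofReal_ofNat]
  refine ENNReal.tsum_le_two_mul_of_le_add_inv_two_mul ?_ fun k => ?_
  · rw [← ENNReal.ofReal_tsum_of_nonneg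
      (fun k => mul_nonneg (Real.rpow_nonneg (ha0 k) _) (zpow_pos hT0 k).le) hsum]
    exact ENNReal.ofReal_ne_top
  rw [zpow_add_one₀ hT0.ne']
  exact ofReal_rpow_one_sub_mul_le_youngConst hα0 hα1 hT0 (zpow_pos hT0 k) (ha0 k) (ha0 (k + 1))
    fun h => le_antisymm (h ▸ hmono k) (ha0 (k + 1))

theorem discrete_holder_lemma_general (n : ℕ) (s p T : ℝ) (hp : 1 ≤ p) (hs : 0 < s)
    (hsp : s * p < n) (hT : 1 < T) :
    ∃ C : ℝ, 0 < C ∧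
      ∀ (a : ℤ → ℝ) (N : ℤ) (M : ℝ),
        (∀ k, 0 ≤ a k) → (∀ k, a (k + 1) ≤ a k) → (∀ k, a k ≤ M) →
        (∀ k, N ≤ k → a k = 0) →
        (∑' k : ℤ, ENNReal.ofReal (a k ^ (((n : ℝ) - s * p) / (n : ℝ)) * T ^ k))
          ≤ ENNReal.ofReal C *
            ∑' k : ℤ, ENNReal.ofReal
              (if a k = 0 then 0 else a (k + 1) * a k ^ (-(s * p) / (n : ℝ)) * T ^ k) := by
  have hsp0 : 0 < s * p := mul_pos hs (by linarith)
  have hn : (0 : ℝ) < n := hsp0.trans hsp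
  have hα0 : 0 < s * p / n := div_pos hsp0 hn
  have hα1 : s * p / n < 1 := (div_lt_one hn).2 hsp
  have hexp : ((n : ℝ) - s * p) / n = 1 - s * p / n := by field_simp
  refine ⟨2 * youngConst (s * p / n) T 2⁻¹,
    mul_pos two_pos (youngConst_pos hα0 hα1 (by linarith) (inv_pos.2 two_pos)),
    fun a N M ha0 hmono hM hzero => ?_⟩
  rw [hexp, neg_div]
  exact tsum_ofReal_rpow_mul_zpow_le hα0 hα1 hT ha0 hmono hM hzero

/-- Let `s ∈ (0,1)`, `p ∈ [1,∞)` with `sp < n`, and fix `T > 1`. Then there is a constant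
`C = C(n,p,s,T) > 0`, independent of the sequence and of `N`, such that for every bounded,
nonnegative, nonincreasing sequence `(a_k)_{k∈ℤ}` with `a_k = 0` for all `k ≥ N`,
`∑_k a_k^{(n−sp)/n} T^k ≤ C ∑_{k : a_k ≠ 0} a_{k+1} a_k^{−sp/n} T^k`. -/
theorem discrete_holder_lemma (n : ℕ) (s p T : ℝ) (hp : 1 ≤ p) (hs : 0 < s) (hs1 : s < 1)
    (hsp : s * p < n) (hT : 1 < T) :
    ∃ C : ℝ, 0 < C ∧
      ∀ (a : ℤ → ℝ) (N : ℤ) (M : ℝ),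
        (∀ k, 0 ≤ a k) → (∀ k, a (k + 1) ≤ a k) → (∀ k, a k ≤ M) →
        (∀ k, N ≤ k → a k = 0) →
        (∑' k : ℤ, ENNReal.ofReal (a k ^ (((n : ℝ) - s * p) / (n : ℝ)) * T ^ k))
          ≤ ENNReal.ofReal C *
            ∑' k : ℤ, ENNReal.ofReal
              (if a k = 0 then 0 else a (k + 1) * a k ^ (-(s * p) / (n : ℝ)) * T ^ k) :=
  discrete_holder_lemma_general n s p T hp hs hsp hT
end
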